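/- arXiv:1405.3237 — 2 statements merged into one kernel-verified Lean document; each statement's English description precedes it below -/
import Mathlib

section
/- Let G be a group satisfying (H1) and let H₁, H₂ ∈ L(G). Then H₁ ∩ H₂ = 1 if and only if every element of H₁ commutes with every element of H₂ (i.e. the commutator subgroup [H₁, H₂] is trivial). -/
variable {G : Type*} [Group G]

/-- The conjugate `B ^ g = g⁻¹ * B * g` of a subgroup `B` by an element `g`. -/
def conjBy (B : Subgroup G) (g : G) : Subgroup G :=
  B.map (MulAut.conj g⁻¹).toMonoidHom

/-- A subgroup is virtually solvable if it has a solvable subgroup of finite index. -/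
def VirtSolvable (H : Subgroup G) : Prop :=
  ∃ M : Subgroup G, M ≤ H ∧ M.relIndex H ≠ 0 ∧ IsSolvable ↥M

/-- A subgroup is virtually nilpotent if it has a nilpotent subgroup of finite index. -/
def VirtNilpotent (H : Subgroup G) : Prop :=
  ∃ M : Subgroup G, M ≤ H ∧ M.relIndex H ≠ 0 ∧ Group.IsNilpotent ↥M

/-- Hypothesis (H1): every virtually solvable subgroup whose normalizer has finite index
(i.e. belonging to `L(G)`) is trivial. -/
def HypH1 (G : Type*) [Group G] : Prop :=
  ∀ H : Subgroup G, (Subgroup.normalizer (H : Set G)).FiniteIndex → VirtSolvable H → H = ⊥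

/-- Hypothesis (H2): every nontrivial normal subgroup of `G` contains the derived subgroup
of some finite-index subgroup of `G`. -/
def HypH2 (G : Type*) [Group G] : Prop :=
  ∀ N : Subgroup G, N.Normal → N ≠ ⊥ →
    ∃ G₀ : Subgroup G, G₀.FiniteIndex ∧ ⁅G₀, G₀⁆ ≤ N

/-- `VA K H` means `K ≤va H`: `K ≤ H` and `K` contains the derived subgroup of some
finite-index subgroup of `H`. -/
def VA (K H : Subgroup G) : Prop :=
  K ≤ H ∧ ∃ A : Subgroup G, A ≤ H ∧ A.relIndex H ≠ 0 ∧ ⁅A, A⁆ ≤ K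

/-- A subgroup `B` is basal if its normalizer has finite index and every conjugate of `B`
either equals `B` or meets `B` trivially. -/
def IsBasal (B : Subgroup G) : Prop :=
  (Subgroup.normalizer (B : Set G)).FiniteIndex ∧ ∀ g : G, conjBy B g = B ∨ conjBy B g ⊓ B = ⊥

/-- The rigid normalizer `R(A)` of a basal subgroup `A`: the intersection of the
normalizers of all basal subgroups meeting `A` trivially. -/
def rigidNormalizer (A : Subgroup G) : Subgroup G :=
  ⨅ B ∈ {B : Subgroup G | IsBasal B ∧ A ⊓ B = ⊥}, Subgroup.normalizer (B : Set G)

/-!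
Under (H1) every virtually abelian member of `L(G)` is trivial; in particular a member `X` of
`L(G)` has trivial centre `X ⊓ centralizer X`, which is again in `L(G)`.

Suppose `H₁ ⊓ H₂ = ⊥` and let `N` be a normal subgroup of finite index normalising `H₁` and
`H₂`, so that `Aᵢ = Hᵢ ⊓ N` lie in `L(G)`. First `⁅A₁, A₂⁆ ≤ H₁ ⊓ H₂ = ⊥`. Each further step is
an application of the three subgroups lemma whose output lands in the trivial centre of some
`Aᵢ`: it shows successively that `H₂` centralises `A₁`, that `K = ⁅H₁, H₂⁆` centralises `A₁`,
and that `K ⊓ N` centralises `H₁` (and symmetrically `H₂`). So `K ⊓ N` is abelian of finite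
index in `K ∈ L(G)`, whence `K = ⊥`. Conversely, if `⁅H₁, H₂⁆ = ⊥` then `H₁ ⊓ H₂` is an abelian
member of `L(G)`.
-/

open Subgroup

namespace Subgroup

theorem normalizer_le_normalizer_centralizer (H : Subgroup G) :
    normalizer (H : Set G) ≤ normalizer (centralizer (H : Set G) : Set G) := by
  rw [le_normalizer_iff]
  intro g hg c hc
  rw [mem_centralizer_iff] at hc ⊢
  intro x hx
  have hx' : g⁻¹ * x * g ∈ H := by
    simpa using le_normalizer_iff.mp le_rfl g⁻¹ (inv_mem hg) x hx
  calc x * (g * c * g⁻¹) = g * ((g⁻¹ * x * g) * c) * g⁻¹ := by group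
    _ = g * (c * (g⁻¹ * x * g)) * g⁻¹ := by rw [hc _ hx']
    _ = g * c * g⁻¹ * x := by group

theorem inf_normalizer_le_normalizer_commutator (H₁ H₂ : Subgroup G) :
    normalizer (H₁ : Set G) ⊓ normalizer (H₂ : Set G) ≤
      normalizer ((⁅H₁, H₂⁆ : Subgroup G) : Set G) := by
  intro g hg
  obtain ⟨hg₁, hg₂⟩ := mem_inf.mp hg
  rw [mem_normalizer_iff_map_conj_eq] at hg₁ hg₂ ⊢
  rw [map_commutator, hg₁, hg₂]

theorem le_normalizer_inf_of_normal {H K N : Subgroup G} [N.Normal]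
    (hK : K ≤ normalizer (H : Set G)) : K ≤ normalizer ((H ⊓ N : Subgroup G) : Set G) :=
  (le_inf hK le_normalizer_of_normal).trans inf_normalizer_le_normalizer_inf

theorem commutator_inf_normal_le (H N : Subgroup G) [N.Normal] : ⁅H ⊓ N, H⁆ ≤ H ⊓ N :=
  le_normalizer_iff_commutator_le_left.mp (le_normalizer_inf_of_normal le_normalizer)

theorem commutator_self_eq_bot_of_le_sup {M H₁ H₂ : Subgroup G} (hM : M ≤ H₁ ⊔ H₂)
    (h₁ : ⁅M, H₁⁆ = ⊥) (h₂ : ⁅M, H₂⁆ = ⊥) : ⁅M, M⁆ = ⊥ := by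
  rw [commutator_eq_bot_iff_le_centralizer] at h₁ h₂ ⊢
  exact le_centralizer_iff.mp <|
    hM.trans <| sup_le (le_centralizer_iff.mp h₁) (le_centralizer_iff.mp h₂)

theorem commutator_eq_bot_of_le_of_rotate {P Q X : Subgroup G}
    (hX : X ⊓ centralizer (X : Set G) = ⊥) (hle : ⁅P, Q⁆ ≤ X)
    (h₁ : ⁅⁅Q, X⁆, P⁆ = ⊥) (h₂ : ⁅⁅X, P⁆, Q⁆ = ⊥) : ⁅P, Q⁆ = ⊥ :=
  eq_bot_iff.mpr <| hX ▸ le_inf hle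
    (commutator_eq_bot_iff_le_centralizer.mp (commutator_commutator_eq_bot_of_rotate h₁ h₂))

end Subgroup

namespace HypH1

theorem eq_bot_of_relIndex_ne_zero_of_commutator_self_eq_bot (hH1 : HypH1 G)
    {K M : Subgroup G} (hK : (normalizer (K : Set G)).FiniteIndex) (hMK : M ≤ K)
    (hM : M.relIndex K ≠ 0) (hMM : ⁅M, M⁆ = ⊥) : K = ⊥ := by
  have : IsMulCommutative M := commutator_self_eq_bot_iff.mp hMM
  exact hH1 K hK
    ⟨M, hMK, hM, Group.isSolvable_of_comm fun a b ↦ Subtype.ext (setLike_mul_comm a.2 b.2)⟩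

theorem eq_bot_of_commutator_self_eq_bot (hH1 : HypH1 G) {K : Subgroup G}
    (hK : (normalizer (K : Set G)).FiniteIndex) (hKK : ⁅K, K⁆ = ⊥) : K = ⊥ :=
  hH1.eq_bot_of_relIndex_ne_zero_of_commutator_self_eq_bot hK le_rfl (by simp) hKK

theorem inf_centralizer_eq_bot (hH1 : HypH1 G) {X : Subgroup G}
    (hX : (normalizer (X : Set G)).FiniteIndex) : X ⊓ centralizer (X : Set G) = ⊥ := by
  refine hH1.eq_bot_of_commutator_self_eq_bot ?_ ?_
  · exact finiteIndex_of_le <| (le_inf le_rfl (normalizer_le_normalizer_centralizer X)).trans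
      inf_normalizer_le_normalizer_inf
  · exact commutator_eq_bot_iff_le_centralizer.mpr <|
      inf_le_right.trans (centralizer_le inf_le_left)

variable {H₁ H₂ N : Subgroup G} [N.Normal] [N.FiniteIndex]

theorem commutator_inf_normal_eq_bot_of_inf_eq_bot (hH1 : HypH1 G)
    (hN₁ : N ≤ normalizer (H₁ : Set G)) (hN₂ : N ≤ normalizer (H₂ : Set G))
    (h : H₁ ⊓ H₂ = ⊥) :
    ⁅H₂, H₁ ⊓ N⁆ = ⊥ := by
  have hB : (H₂ ⊓ N) ⊓ centralizer ((H₂ ⊓ N : Subgroup G) : Set G) = ⊥ :=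
    hH1.inf_centralizer_eq_bot (finiteIndex_of_le (le_normalizer_inf_of_normal hN₂))
  have hAB : ⁅H₁ ⊓ N, H₂ ⊓ N⁆ = ⊥ := by
    refine eq_bot_iff.mpr (h ▸ le_inf ?_ ?_)
    · exact (commutator_mono inf_le_left inf_le_right).trans
        (le_normalizer_iff_commutator_le_left.mp hN₁)
    · exact (commutator_mono inf_le_right inf_le_left).trans
        (le_normalizer_iff_commutator_le_right.mp hN₂)
  refine commutator_eq_bot_of_le_of_rotate hB (le_inf ?_ ?_)
    (by rw [hAB, commutator_bot_left]) ?_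
  · exact le_normalizer_iff_commutator_le_left.mp (inf_le_right.trans hN₂)
  · exact (commutator_mono le_top inf_le_right).trans (commutator_le_right ⊤ N)
  · exact eq_bot_iff.mpr <| (commutator_mono (commutator_inf_normal_le H₂ N) le_rfl).trans
      ((commutator_comm_le _ _).trans hAB.le)

theorem commutator_commutator_inf_normal_eq_bot_of_inf_eq_bot (hH1 : HypH1 G)
    (hN₁ : N ≤ normalizer (H₁ : Set G)) (hN₂ : N ≤ normalizer (H₂ : Set G))
    (h : H₁ ⊓ H₂ = ⊥) :
    ⁅⁅H₁, H₂⁆, H₁ ⊓ N⁆ = ⊥ := by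
  have hA := hH1.commutator_inf_normal_eq_bot_of_inf_eq_bot hN₁ hN₂ h
  refine commutator_commutator_eq_bot_of_rotate (by rw [hA, commutator_bot_left]) ?_
  exact eq_bot_iff.mpr <| (commutator_mono (commutator_inf_normal_le H₁ N) le_rfl).trans
    ((commutator_comm_le _ _).trans hA.le)

theorem commutator_commutator_inf_normal_left_eq_bot_of_inf_eq_bot (hH1 : HypH1 G)
    (hN₁ : N ≤ normalizer (H₁ : Set G)) (hN₂ : N ≤ normalizer (H₂ : Set G))
    (h : H₁ ⊓ H₂ = ⊥) :
    ⁅⁅H₁, H₂⁆ ⊓ N, H₁⁆ = ⊥ := by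
  have hA : (H₁ ⊓ N) ⊓ centralizer ((H₁ ⊓ N : Subgroup G) : Set G) = ⊥ :=
    hH1.inf_centralizer_eq_bot (finiteIndex_of_le (le_normalizer_inf_of_normal hN₁))
  have hAM : ⁅H₁ ⊓ N, ⁅H₁, H₂⁆ ⊓ N⁆ = ⊥ := eq_bot_iff.mpr <|
    (commutator_mono le_rfl inf_le_left).trans
      ((commutator_comm_le _ _).trans
        (hH1.commutator_commutator_inf_normal_eq_bot_of_inf_eq_bot hN₁ hN₂ h).le)
  refine commutator_eq_bot_of_le_of_rotate hA (le_inf ?_ ?_) ?_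
    (by rw [hAM, commutator_bot_left])
  · exact le_normalizer_iff_commutator_le_right.mp (inf_le_right.trans hN₁)
  · exact (commutator_mono inf_le_right le_top).trans (commutator_le_left N ⊤)
  · have hA₁ : ⁅H₁, H₁ ⊓ N⁆ ≤ H₁ ⊓ N :=
      (commutator_comm_le _ _).trans (commutator_inf_normal_le H₁ N)
    exact eq_bot_iff.mpr <| (commutator_mono hA₁ le_rfl).trans hAM.le

theorem commutator_eq_bot_of_inf_eq_bot (hH1 : HypH1 G)
    [(normalizer (H₁ : Set G)).FiniteIndex] [(normalizer (H₂ : Set G)).FiniteIndex]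
    (h : H₁ ⊓ H₂ = ⊥) : ⁅H₁, H₂⁆ = ⊥ := by
  set N := (normalizer (H₁ : Set G) ⊓ normalizer (H₂ : Set G)).normalCore
  have hN₁ : N ≤ normalizer (H₁ : Set G) := normalCore_le _ |>.trans inf_le_left
  have hN₂ : N ≤ normalizer (H₂ : Set G) := normalCore_le _ |>.trans inf_le_right
  have hM₁ := hH1.commutator_commutator_inf_normal_left_eq_bot_of_inf_eq_bot hN₁ hN₂ h
  have hM₂ := hH1.commutator_commutator_inf_normal_left_eq_bot_of_inf_eq_bot hN₂ hN₁
    (inf_comm H₁ H₂ ▸ h)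
  rw [commutator_comm H₂ H₁] at hM₂
  refine hH1.eq_bot_of_relIndex_ne_zero_of_commutator_self_eq_bot
    (finiteIndex_of_le (inf_normalizer_le_normalizer_commutator H₁ H₂)) inf_le_left
    (inf_relIndex_left _ N ▸ isFiniteRelIndex_of_finiteIndex.relIndex_ne_zero)
    (commutator_self_eq_bot_of_le_sup (inf_le_left.trans (commutator_le_sup H₁ H₂)) hM₁ hM₂)

theorem inf_eq_bot_of_commutator_eq_bot (hH1 : HypH1 G)
    [(normalizer (H₁ : Set G)).FiniteIndex] [(normalizer (H₂ : Set G)).FiniteIndex]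
    (h : ⁅H₁, H₂⁆ = ⊥) : H₁ ⊓ H₂ = ⊥ :=
  hH1.eq_bot_of_commutator_self_eq_bot (finiteIndex_of_le inf_normalizer_le_normalizer_inf)
    (eq_bot_iff.mpr <| (commutator_mono inf_le_left inf_le_right).trans h.le)

end HypH1

theorem statement2 (hH1 : HypH1 G) (H₁ H₂ : Subgroup G)
    (h₁ : (Subgroup.normalizer (H₁ : Set G)).FiniteIndex) (h₂ : (Subgroup.normalizer (H₂ : Set G)).FiniteIndex) :
    H₁ ⊓ H₂ = ⊥ ↔ ⁅H₁, H₂⁆ = ⊥ :=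
  have := h₁
  have := h₂
  ⟨hH1.commutator_eq_bot_of_inf_eq_bot, hH1.inf_eq_bot_of_commutator_eq_bot⟩
end

section
/- Let G be a group satisfying (H1). Let V₂ ∈ L(G), and let V, W be subgroups of G with V₂ ≤ W and V ∩ V₂ = 1. Suppose there is a subgroup W₀ of finite index in W whose derived subgroup satisfies [W₀, W₀] ≤ V. Then V₂ = 1. (This is the key step showing that the map v ↦ [rst(v)] from a tree carrying a branch action of G to the structure graph of G is injective: if v ≠ w were comparable vertices with rst(v) ~ rst(w), a sibling rigid stabilizer V₂ = rst(v₂) would violate this statement.) -/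
variable {G : Type*} [Group G]

open Subgroup

theorem Subgroup.isSolvable_of_commutator_self_eq_bot {M : Subgroup G} (h : ⁅M, M⁆ = ⊥) :
    Group.IsSolvable M :=
  have := commutator_self_eq_bot_iff.mp h
  Group.isSolvable_of_comm this.is_comm.comm

/-- The witness `A ⊓ H` is even abelian. -/
theorem VirtSolvable.of_commutator_inf_eq_bot {H W A : Subgroup G} (hHW : H ≤ W)
    (hA : A.relIndex W ≠ 0) (hAH : ⁅A, A⁆ ⊓ H = ⊥) : VirtSolvable H := by
  refine ⟨A ⊓ H, inf_le_right, ?_, isSolvable_of_commutator_self_eq_bot ?_⟩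
  · rw [inf_relIndex_right]
    exact mt (relIndex_eq_zero_of_le_right hHW) hA
  · refine eq_bot_iff.mpr (le_trans ?_ hAH.le)
    exact le_inf (commutator_mono inf_le_left inf_le_left)
      ((commutator_le_self H).trans' (commutator_mono inf_le_right inf_le_right))

theorem statement17_general (hH1 : HypH1 G) (V₂ : Subgroup G)
    (hV₂ : (Subgroup.normalizer (V₂ : Set G)).FiniteIndex)
    (V W : Subgroup G) (hV₂W : V₂ ≤ W) (hVV₂ : V ⊓ V₂ = ⊥)
    (W₀ : Subgroup G) (hW₀fin : W₀.relIndex W ≠ 0)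
    (hW₀c : ⁅W₀, W₀⁆ ≤ V) :
    V₂ = ⊥ :=
  hH1 V₂ hV₂ <| .of_commutator_inf_eq_bot hV₂W hW₀fin <|
    eq_bot_iff.mpr <| hVV₂ ▸ inf_le_inf_right V₂ hW₀c

theorem statement17 (hH1 : HypH1 G) (V₂ : Subgroup G)
    (hV₂ : (Subgroup.normalizer (V₂ : Set G)).FiniteIndex)
    (V W : Subgroup G) (hV₂W : V₂ ≤ W) (hVV₂ : V ⊓ V₂ = ⊥)
    (W₀ : Subgroup G) (hW₀ : W₀ ≤ W) (hW₀fin : W₀.relIndex W ≠ 0)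
    (hW₀c : ⁅W₀, W₀⁆ ≤ V) :
    V₂ = ⊥ :=
  statement17_general hH1 V₂ hV₂ V W hV₂W hVV₂ W₀ hW₀fin hW₀c
end
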